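/- arXiv:2104.04199 — 3 statements merged into one kernel-verified Lean document; each statement's English description precedes it below -/
import Mathlib

section
/- Let 0 < p < 1. For every μ > 0 and every t ∈ ℝ, one has 0 ≤ s_μ(t)^p − |t|^p ≤ (μ/4)^p; in particular |s_μ(t)^p − |t|^p| ≤ (1/4)^p · μ^p, so t ↦ s_μ(t)^p approximates |t|^p with κ = (1/4)^p and ω(μ) = μ^p. -/
open Filter Topology

/-- The uniform smoothing function of the absolute value:
`s_μ(t) = |t|` if `|t| ≥ μ/2`, and `s_μ(t) = t²/μ + μ/4` if `|t| < μ/2`. -/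
noncomputable def sMu (μ t : ℝ) : ℝ := if μ / 2 ≤ |t| then |t| else t ^ 2 / μ + μ / 4

lemma real_rpow_add_le {p x y : ℝ} (hp : 0 ≤ p) (hp1 : p ≤ 1) (hx : 0 ≤ x) (hy : 0 ≤ y) :
    (x + y) ^ p ≤ x ^ p + y ^ p := by
  have h := NNReal.rpow_add_le_add_rpow x.toNNReal y.toNNReal hp hp1
  have h' := NNReal.coe_le_coe.2 h
  simpa [NNReal.coe_rpow, Real.coe_toNNReal _ hx, Real.coe_toNNReal _ hy,
    Real.coe_toNNReal _ (add_nonneg hx hy)] using h'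

/-- Let `0 < p < 1`. For every `μ > 0` and every `t ∈ ℝ`, one has
`0 ≤ s_μ(t)^p − |t|^p ≤ (μ/4)^p`; in particular `|s_μ(t)^p − |t|^p| ≤ (1/4)^p · μ^p`,
so `t ↦ s_μ(t)^p` approximates `|t|^p` with `κ = (1/4)^p` and `ω(μ) = μ^p`. -/
theorem sMu_rpow_approx (p : ℝ) (hp0 : 0 < p) (hp1 : p < 1) (μ : ℝ) (hμ : 0 < μ) (t : ℝ) :
    0 ≤ sMu μ t ^ p - |t| ^ p ∧ sMu μ t ^ p - |t| ^ p ≤ (μ / 4) ^ p ∧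
      |sMu μ t ^ p - |t| ^ p| ≤ (1 / 4 : ℝ) ^ p * μ ^ p := by
  have hle : |t| ≤ sMu μ t := by
    unfold sMu
    split_ifs with h
    · exact le_refl _
    · rw [← sub_nonneg]
      have heq : t ^ 2 / μ + μ / 4 - |t| = (t ^ 2 + μ ^ 2 / 4 - |t| * μ) / μ := by
        field_simp
      rw [heq]
      apply div_nonneg _ hμ.le
      nlinarith [sq_nonneg (|t| - μ / 2), sq_abs t]
  have hdiff : sMu μ t - |t| ≤ μ / 4 := by
    unfold sMu
    split_ifs with h
    · linarith
    · rw [← sub_nonneg]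
      have heq : μ / 4 - (t ^ 2 / μ + μ / 4 - |t|) = (|t| * μ - t ^ 2) / μ := by
        field_simp; ring
      rw [heq]
      apply div_nonneg _ hμ.le
      nlinarith [abs_nonneg t, sq_abs t]
  have h0 : 0 ≤ sMu μ t ^ p - |t| ^ p := by
    have := Real.rpow_le_rpow (abs_nonneg t) hle hp0.le
    linarith
  have h1 : sMu μ t ^ p - |t| ^ p ≤ (μ / 4) ^ p := by
    have key : sMu μ t ^ p ≤ |t| ^ p + (sMu μ t - |t|) ^ p := by
      have := real_rpow_add_le hp0.le hp1.le (abs_nonneg t) (by linarith : (0:ℝ) ≤ sMu μ t - |t|)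
      simpa using this
    have h2 : (sMu μ t - |t|) ^ p ≤ (μ / 4) ^ p :=
      Real.rpow_le_rpow (by linarith) hdiff hp0.le
    linarith
  refine ⟨h0, h1, ?_⟩
  rw [abs_of_nonneg h0]
  calc sMu μ t ^ p - |t| ^ p ≤ (μ / 4) ^ p := h1
    _ = (1 / 4 : ℝ) ^ p * μ ^ p := by
        rw [show μ / 4 = (1 / 4 : ℝ) * μ by ring,
          Real.mul_rpow (by norm_num) hμ.le]
end

section
/- Let 0 < p < 1 and v ∈ ℝ, and set a = 4^{p−1} v / (2p). For any sequence μ_k > 0 with μ_k → 0, define t_k = a · μ_k^{2−p}. Then t_k → 0 and the derivative of the function t ↦ s_{μ_k}(t)^p evaluated at t_k, namely p · s_{μ_k}(t_k)^{p−1} · s_{μ_k}'(t_k), converges to v as k → ∞. Consequently, every real number v is attained as a limit of derivatives of the smoothing functions t ↦ s_{μ_k}(t)^p at points t_k → 0 with μ_k → 0⁺; that is, the subdifferential of f(t) = |t|^p associated with this smoothing at t = 0 equals (−∞, ∞). -/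
open Filter Topology

/-- The derivative of the uniform smoothing function:
`s_μ'(t) = sign(t)` if `|t| ≥ μ/2`, and `s_μ'(t) = 2t/μ` if `|t| < μ/2`. -/
noncomputable def sMuDeriv (μ t : ℝ) : ℝ := if μ / 2 ≤ |t| then Real.sign t else 2 * t / μ

/-- Let `0 < p < 1`, `v ∈ ℝ`, and `a = 4^{p−1} v / (2p)`. For any sequence `μ_k > 0` with
`μ_k → 0`, setting `t_k = a · μ_k^{2−p}`, one has `t_k → 0` and
`p · s_{μ_k}(t_k)^{p−1} · s_{μ_k}'(t_k) → v` as `k → ∞`. Hence every real number `v` is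
a limit of derivatives of `t ↦ s_{μ_k}(t)^p` at points `t_k → 0` with `μ_k → 0⁺`: the
subdifferential of `f(t) = |t|^p` associated with this smoothing at `t = 0` is `(−∞, ∞)`. -/
theorem sMu_rpow_deriv_attains_any_value (p : ℝ) (hp0 : 0 < p) (hp1 : p < 1) (v : ℝ)
    (μ : ℕ → ℝ) (hμpos : ∀ k, 0 < μ k) (hμ0 : Filter.Tendsto μ Filter.atTop (nhds 0)) :
    Filter.Tendsto (fun k => (4 : ℝ) ^ (p - 1) * v / (2 * p) * μ k ^ (2 - p))
        Filter.atTop (nhds 0) ∧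
    Filter.Tendsto (fun k =>
        p * sMu (μ k) ((4 : ℝ) ^ (p - 1) * v / (2 * p) * μ k ^ (2 - p)) ^ (p - 1) *
          sMuDeriv (μ k) ((4 : ℝ) ^ (p - 1) * v / (2 * p) * μ k ^ (2 - p)))
      Filter.atTop (nhds v) := by
  set a : ℝ := (4 : ℝ) ^ (p - 1) * v / (2 * p) with ha
  -- a general limit fact: μ k ^ q → 0 for q > 0
  have hq : ∀ q : ℝ, 0 < q → Tendsto (fun k => μ k ^ q) atTop (nhds 0) := by
    intro q hqpos
    have h := ((Real.continuousAt_rpow_const 0 q (Or.inr hqpos.le)).tendsto).comp hμ0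
    rwa [Real.zero_rpow hqpos.ne'] at h
  have h2p : (0 : ℝ) < 2 - p := by linarith
  have ht0 : Tendsto (fun k => a * μ k ^ (2 - p)) atTop (nhds 0) := by
    have := (hq (2 - p) h2p).const_mul a
    simpa using this
  constructor
  · exact ht0
  -- eventually |t_k| < μ_k / 2
  have habs : Tendsto (fun k => |a| * μ k ^ (1 - p)) atTop (nhds 0) := by
    have := (hq (1 - p) (by linarith)).const_mul |a|
    simpa using this
  have hev : ∀ᶠ k in atTop, |a| * μ k ^ (1 - p) < 1 / 2 :=
    habs.eventually_lt_const (by norm_num)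
  -- the limit of the reparametrized expression
  have hX : Tendsto (fun k => 1 + 4 * a ^ 2 * μ k ^ (2 - 2 * p)) atTop (nhds 1) := by
    have := ((hq (2 - 2 * p) (by linarith)).const_mul (4 * a ^ 2)).const_add 1
    simpa using this
  have hXp : Tendsto (fun k => (1 + 4 * a ^ 2 * μ k ^ (2 - 2 * p)) ^ (p - 1))
      atTop (nhds 1) := by
    have h := ((Real.continuousAt_rpow_const 1 (p - 1) (Or.inl one_ne_zero)).tendsto).comp hX
    rwa [Real.one_rpow] at h
  have hg : Tendsto (fun k => v * (1 + 4 * a ^ 2 * μ k ^ (2 - 2 * p)) ^ (p - 1))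
      atTop (nhds v) := by
    have := hXp.const_mul v
    simpa using this
  refine Tendsto.congr' ?_ hg
  filter_upwards [hev] with k hk
  set m := μ k with hm
  have hmpos : 0 < m := hμpos k
  set t := a * m ^ (2 - p) with htdef
  have hrpos : (0 : ℝ) < m ^ (2 - p) := Real.rpow_pos_of_pos hmpos _
  have hsplit : m ^ (2 - p) = m ^ (1 - p) * m := by
    have h := Real.rpow_add hmpos (1 - p) 1
    rw [Real.rpow_one] at h
    rw [show (2 : ℝ) - p = 1 - p + 1 by ring, h]
  have htlt : |t| < m / 2 := by
    have : |t| = |a| * m ^ (1 - p) * m := by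
      rw [htdef, abs_mul, abs_of_pos hrpos, hsplit, mul_assoc]
    rw [this]
    calc |a| * m ^ (1 - p) * m < 1 / 2 * m := mul_lt_mul_of_pos_right hk hmpos
      _ = m / 2 := by ring
  have hnot : ¬ (m / 2 ≤ |t|) := not_le.mpr htlt
  set X : ℝ := 1 + 4 * a ^ 2 * m ^ (2 - 2 * p) with hXdef
  have hXpos : 0 < X := by
    have : 0 ≤ 4 * a ^ 2 * m ^ (2 - 2 * p) := by positivity
    rw [hXdef]; linarith
  have hkey : t ^ 2 / m + m / 4 = m / 4 * X := by
    have h1 : (m ^ (2 - p)) ^ 2 = m ^ (2 - 2 * p) * m ^ 2 := by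
      rw [← Real.rpow_natCast (m ^ (2 - p)) 2, ← Real.rpow_natCast m 2,
        ← Real.rpow_mul hmpos.le, ← Real.rpow_add hmpos]
      norm_num
      ring_nf
    have : t ^ 2 = a ^ 2 * (m ^ (2 - 2 * p) * m ^ 2) := by
      rw [htdef, mul_pow, h1]
    rw [this, hXdef]
    field_simp
    ring
  show v * X ^ (p - 1) = p * sMu m t ^ (p - 1) * sMuDeriv m t
  symm
  rw [sMu, sMuDeriv, if_neg hnot, if_neg hnot, hkey,
    Real.mul_rpow (by positivity) hXpos.le]
  have h4 : ((4 : ℝ)) ^ (p - 1) ≠ 0 := (Real.rpow_pos_of_pos (by norm_num) _).ne'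
  have hm4 : (m / 4) ^ (p - 1) = m ^ (p - 1) / 4 ^ (p - 1) :=
    Real.div_rpow hmpos.le (by norm_num) _
  have hmm : m ^ (p - 1) * m ^ (1 - p) = 1 := by
    rw [← Real.rpow_add hmpos]; norm_num
  have h2t : 2 * t / m = 2 * a * m ^ (1 - p) := by
    rw [htdef, hsplit]
    field_simp
  rw [hm4, h2t]
  calc p * (m ^ (p - 1) / 4 ^ (p - 1) * X ^ (p - 1)) * (2 * a * m ^ (1 - p))
      = p * 2 * a / 4 ^ (p - 1) * (m ^ (p - 1) * m ^ (1 - p)) * X ^ (p - 1) := by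
        ring
    _ = p * 2 * a / 4 ^ (p - 1) * X ^ (p - 1) := by rw [hmm]; ring
    _ = v * X ^ (p - 1) := by
        rw [ha]
        field_simp
end

section
/- Let n, m ≥ 1, let f̂ : ℝⁿ → ℝ be continuously differentiable, let B be a real m × n matrix of full column rank, let λ > 0, and let 0 < p < 1. Define f(x) = f̂(x) + λ Σ_{i=1}^m |(Bx)_i|^p and f̃(x, μ) = f̂(x) + λ Σ_{i=1}^m s_μ((Bx)_i)^p for μ > 0. Then f̃ satisfies gradient sub-consistency on ℝⁿ: for every x ∈ ℝⁿ and every u ∈ ℝⁿ such that ∇_x f̃(z_k, μ_k) → u for some sequences z_k → x and μ_k → 0⁺, one has u ∈ ∂f(x), the limiting subdifferential of f at x. -/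
open Filter Topology

/-- `v` is a regular subgradient of `f` at `x̄`:
`liminf_{x → x̄, x ≠ x̄} (f(x) − f(x̄) − ⟨v, x − x̄⟩)/‖x − x̄‖ ≥ 0`. -/
def IsRegularSubgradient {n : ℕ} (f : EuclideanSpace ℝ (Fin n) → ℝ)
    (x v : EuclideanSpace ℝ (Fin n)) : Prop :=
  ∀ ε > (0 : ℝ), ∃ δ > (0 : ℝ), ∀ y, y ≠ x → ‖y - x‖ < δ →
    -ε * ‖y - x‖ ≤ f y - f x - (inner ℝ v (y - x) : ℝ)

/-- `v ∈ ∂f(x̄)`: `v` is a limiting subgradient of `f` at `x̄`, i.e. a limit of regular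
subgradients `v_k` of `f` at points `x_k → x̄` with `f(x_k) → f(x̄)`. -/
def IsLimitingSubgradient {n : ℕ} (f : EuclideanSpace ℝ (Fin n) → ℝ)
    (x v : EuclideanSpace ℝ (Fin n)) : Prop :=
  ∃ (xk vk : ℕ → EuclideanSpace ℝ (Fin n)),
    Filter.Tendsto xk Filter.atTop (nhds x) ∧
    Filter.Tendsto (fun k => f (xk k)) Filter.atTop (nhds (f x)) ∧
    (∀ k, IsRegularSubgradient f (xk k) (vk k)) ∧
    Filter.Tendsto vk Filter.atTop (nhds v)

/-!
With `bᵢ` the rows of `B`, the gradient of `f̃(·, μ_k)` at `z_k` is `∇f̂(z_k) + λ Σ dₖᵢ bᵢ`.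
If `(Bx)ᵢ ≠ 0`, then eventually `|(Bz_k)ᵢ| > μ_k / 2`, where `s_μ` agrees with `|·|`, so `dₖᵢ`
tends to the derivative of `|t|ᵖ` at `(Bx)ᵢ`. The rest of the sum lies in the span of the rows
with `(Bx)ᵢ = 0`, which is closed, so `u = ∇f̂(x) + λ Σ cᵢ bᵢ` with arbitrary coefficients on those
rows. Since `p < 1`, `|t|ᵖ ≥ c t` near `0` for every `c`, which makes `u` a regular subgradient
of `f` at `x` itself.
-/

open InnerProductSpace
open scoped RealInnerProductSpace

section Gradient

variable {E : Type*} [NormedAddCommGroup E] [InnerProductSpace ℝ E] [CompleteSpace E]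
  {f g : E → ℝ} {f' g' x : E}

theorem HasGradientAt.add (hf : HasGradientAt f f' x) (hg : HasGradientAt g g' x) :
    HasGradientAt (fun y => f y + g y) (f' + g') x := by
  rw [hasGradientAt_iff_hasFDerivAt, map_add]
  exact hf.hasFDerivAt.add hg.hasFDerivAt

theorem HasGradientAt.const_mul (c : ℝ) (hf : HasGradientAt f f' x) :
    HasGradientAt (fun y => c * f y) (c • f') x := by
  rw [hasGradientAt_iff_hasFDerivAt, map_smul]
  exact hf.hasFDerivAt.const_mul c

theorem HasGradientAt.sum {ι : Type*} {s : Finset ι} {f : ι → E → ℝ} {f' : ι → E}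
    (hf : ∀ i ∈ s, HasGradientAt (f i) (f' i) x) :
    HasGradientAt (fun y => ∑ i ∈ s, f i y) (∑ i ∈ s, f' i) x := by
  rw [hasGradientAt_iff_hasFDerivAt, map_sum]
  exact HasFDerivAt.fun_sum fun i hi => (hf i hi).hasFDerivAt

theorem HasDerivAt.hasGradientAt_comp_inner {φ : ℝ → ℝ} {φ' : ℝ} {b : E}
    (hφ : HasDerivAt φ φ' ⟪b, x⟫) : HasGradientAt (fun y => φ ⟪b, y⟫) (φ' • b) x := by
  rw [hasGradientAt_iff_hasFDerivAt, map_smul]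
  exact hφ.comp_hasFDerivAt x (innerSL ℝ b).hasFDerivAt

theorem ContDiff.continuous_gradient (hf : ContDiff ℝ 1 f) : Continuous (gradient f) :=
  (toDual ℝ E).symm.continuous.comp (hf.continuous_fderiv one_ne_zero)

end Gradient

section RegularSubgradient

variable {n : ℕ} {f g : EuclideanSpace ℝ (Fin n) → ℝ} {x v w : EuclideanSpace ℝ (Fin n)}

theorem isRegularSubgradient_iff_eventually : IsRegularSubgradient f x v ↔
    ∀ ε > (0 : ℝ), ∀ᶠ y in 𝓝 x, -ε * ‖y - x‖ ≤ f y - f x - ⟪v, y - x⟫ := by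
  refine forall₂_congr fun ε _ => ?_
  rw [Metric.eventually_nhds_iff]
  constructor
  · rintro ⟨δ, hδ, h⟩
    refine ⟨δ, hδ, fun y hy => ?_⟩
    rcases eq_or_ne y x with rfl | hne
    · simp
    · exact h y hne (by rwa [← dist_eq_norm])
  · rintro ⟨δ, hδ, h⟩
    exact ⟨δ, hδ, fun y _ hy => h (by rwa [dist_eq_norm])⟩

theorem HasGradientAt.isRegularSubgradient (h : HasGradientAt f v x) :
    IsRegularSubgradient f x v := by
  refine isRegularSubgradient_iff_eventually.mpr fun ε hε => ?_
  filter_upwards [(hasGradientAt_iff_isLittleO.mp h).def hε] with y hy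
  rw [Real.norm_eq_abs] at hy
  linarith [neg_abs_le (f y - f x - ⟪v, y - x⟫)]

theorem isRegularSubgradient_of_eventually_le (h : ∀ᶠ y in 𝓝 x, f x + ⟪v, y - x⟫ ≤ f y) :
    IsRegularSubgradient f x v := by
  refine isRegularSubgradient_iff_eventually.mpr fun ε hε => ?_
  filter_upwards [h] with y hy
  nlinarith [norm_nonneg (y - x)]

theorem IsRegularSubgradient.add (hf : IsRegularSubgradient f x v)
    (hg : IsRegularSubgradient g x w) : IsRegularSubgradient (fun y => f y + g y) x (v + w) := by
  rw [isRegularSubgradient_iff_eventually] at *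
  intro ε hε
  filter_upwards [hf (ε / 2) (by positivity), hg (ε / 2) (by positivity)] with y hfy hgy
  rw [inner_add_left]
  linarith

theorem IsRegularSubgradient.const_mul {c : ℝ} (hc : 0 < c) (hf : IsRegularSubgradient f x v) :
    IsRegularSubgradient (fun y => c * f y) x (c • v) := by
  rw [isRegularSubgradient_iff_eventually] at *
  intro ε hε
  filter_upwards [hf (ε / c) (by positivity)] with y hy
  have := mul_le_mul_of_nonneg_left hy hc.le
  rw [real_inner_smul_left]
  calc -ε * ‖y - x‖ = c * (-(ε / c) * ‖y - x‖) := by field_simp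
    _ ≤ c * (f y - f x - ⟪v, y - x⟫) := this
    _ = _ := by ring

theorem IsRegularSubgradient.sum {ι : Type*} (s : Finset ι) {f : ι → EuclideanSpace ℝ (Fin n) → ℝ}
    {v : ι → EuclideanSpace ℝ (Fin n)} (h : ∀ i ∈ s, IsRegularSubgradient (f i) x (v i)) :
    IsRegularSubgradient (fun y => ∑ i ∈ s, f i y) x (∑ i ∈ s, v i) := by
  classical
  induction s using Finset.induction_on with
  | empty => exact isRegularSubgradient_of_eventually_le (by simp)
  | insert a s ha ih =>
    simp only [Finset.sum_insert ha]
    exact (h a (s.mem_insert_self a)).add (ih fun i hi => h i (Finset.mem_insert_of_mem hi))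

theorem IsRegularSubgradient.isLimitingSubgradient (h : IsRegularSubgradient f x v) :
    IsLimitingSubgradient f x v :=
  ⟨fun _ => x, fun _ => v, tendsto_const_nhds, tendsto_const_nhds, fun _ => h, tendsto_const_nhds⟩

end RegularSubgradient

theorem eventually_mul_le_abs_rpow {p : ℝ} (hp : p < 1) (c : ℝ) :
    ∀ᶠ t in 𝓝 (0 : ℝ), c * t ≤ |t| ^ p := by
  have hlim : Tendsto (fun t : ℝ => |c| * |t| ^ (1 - p)) (𝓝 0) (𝓝 0) := by
    simpa [Real.zero_rpow (sub_pos.mpr hp).ne'] using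
      ((continuous_abs.tendsto 0).rpow_const (Or.inr (sub_pos.mpr hp).le)).const_mul |c|
  filter_upwards [hlim.eventually_le_const zero_lt_one] with t ht
  have hsplit : |t| = |t| ^ (1 - p) * |t| ^ p := by
    rw [← Real.rpow_add' (abs_nonneg t) (by norm_num), sub_add_cancel, Real.rpow_one]
  calc c * t ≤ |c| * |t| := by rw [← abs_mul]; exact le_abs_self _
    _ = |c| * |t| ^ (1 - p) * |t| ^ p := by rw [mul_assoc, ← hsplit]
    _ ≤ 1 * |t| ^ p := by gcongr
    _ = |t| ^ p := one_mul _

theorem isRegularSubgradient_abs_inner_rpow {n : ℕ} {p : ℝ} (hp0 : 0 < p) (hp1 : p < 1)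
    {b x : EuclideanSpace ℝ (Fin n)} {c : ℝ}
    (hc : ⟪b, x⟫ ≠ 0 → HasDerivAt (fun t => |t| ^ p) c ⟪b, x⟫) :
    IsRegularSubgradient (fun y => |⟪b, y⟫| ^ p) x (c • b) := by
  by_cases hbx : ⟪b, x⟫ = 0
  · refine isRegularSubgradient_of_eventually_le ?_
    have hlim : Tendsto (fun y => ⟪b, y⟫) (𝓝 x) (𝓝 0) :=
      hbx ▸ ((continuous_const.inner continuous_id).tendsto x)
    filter_upwards [hlim.eventually (eventually_mul_le_abs_rpow hp1 c)] with y hy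
    rwa [hbx, abs_zero, Real.zero_rpow hp0.ne', zero_add, real_inner_smul_left, inner_sub_right,
      hbx, sub_zero]
  · exact (hc hbx).hasGradientAt_comp_inner.isRegularSubgradient

theorem contDiffAt_abs_rpow {p a : ℝ} (ha : a ≠ 0) : ContDiffAt ℝ 1 (fun t => |t| ^ p) a :=
  (contDiffAt_abs ha).rpow_const_of_ne (abs_ne_zero.mpr ha)

theorem continuousAt_deriv_abs_rpow {p a : ℝ} (ha : a ≠ 0) :
    ContinuousAt (deriv fun t => |t| ^ p) a := by
  have hC : ContDiffOn ℝ 1 (fun t : ℝ => |t| ^ p) {0}ᶜ :=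
    fun t ht => (contDiffAt_abs_rpow ht).contDiffWithinAt
  exact (hC.continuousOn_deriv_of_isOpen isOpen_compl_singleton le_rfl).continuousAt
    (isOpen_compl_singleton.mem_nhds ha)

theorem differentiable_max_zero_sq : Differentiable ℝ fun t : ℝ => max t 0 ^ 2 := by
  refine fun t => (hasDerivAt_of_hasDerivAt_of_ne' (x := 0) (g := fun s => 2 * max s 0)
    (fun s hs => ?_) (by fun_prop) (by fun_prop) t).differentiableAt
  rcases hs.lt_or_gt with hs | hs
  · have hloc : (fun t : ℝ => max t 0 ^ 2) =ᶠ[𝓝 s] fun _ => 0 := by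
      filter_upwards [Iio_mem_nhds hs] with t ht
      simp [max_eq_right (Set.mem_Iio.mp ht).le]
    simpa [max_eq_right hs.le] using (hasDerivAt_const s (0 : ℝ)).congr_of_eventuallyEq hloc
  · have hloc : (fun t : ℝ => max t 0 ^ 2) =ᶠ[𝓝 s] fun t => t ^ 2 := by
      filter_upwards [Ioi_mem_nhds hs] with t ht
      simp [max_eq_left (Set.mem_Ioi.mp ht).le]
    simpa [max_eq_left hs.le] using (hasDerivAt_pow 2 s).congr_of_eventuallyEq hloc

section Smoothing

variable {μ p : ℝ}

theorem sMu_pos (hμ : 0 < μ) (t : ℝ) : 0 < sMu μ t := by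
  unfold sMu
  split_ifs with h
  · linarith
  · positivity

theorem sMu_eq_max_sq (hμ : 0 < μ) (t : ℝ) :
    sMu μ t = t ^ 2 / μ + μ / 4 - (max (t - μ / 2) 0 ^ 2 + max (-t - μ / 2) 0 ^ 2) / μ := by
  unfold sMu
  split_ifs with h
  · rcases le_abs'.mp h with h | h
    · rw [abs_of_neg (by linarith), max_eq_right (by linarith), max_eq_left (by linarith)]
      field_simp
      ring
    · rw [abs_of_pos (by linarith), max_eq_left (by linarith), max_eq_right (by linarith)]
      field_simp
      ring
  · obtain ⟨h1, h2⟩ := abs_lt.mp (not_le.mp h)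
    rw [max_eq_right (by linarith), max_eq_right (by linarith)]
    simp

theorem differentiable_sMu (hμ : 0 < μ) : Differentiable ℝ (sMu μ) := by
  have h := differentiable_max_zero_sq
  have h1 : Differentiable ℝ fun t : ℝ => max (t - μ / 2) 0 ^ 2 := h.comp (by fun_prop)
  have h2 : Differentiable ℝ fun t : ℝ => max (-t - μ / 2) 0 ^ 2 := h.comp (by fun_prop)
  rw [funext (sMu_eq_max_sq hμ)]
  fun_prop

theorem differentiable_sMu_rpow (hμ : 0 < μ) (p : ℝ) : Differentiable ℝ fun t => sMu μ t ^ p :=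
  fun t => (differentiable_sMu hμ t).rpow_const (Or.inl (sMu_pos hμ t).ne')

theorem deriv_sMu_rpow_of_lt {t : ℝ} (h : μ / 2 < |t|) :
    deriv (fun s => sMu μ s ^ p) t = deriv (fun s => |s| ^ p) t := by
  refine EventuallyEq.deriv_eq ?_
  filter_upwards [(continuous_abs.isOpen_preimage _ isOpen_Ioi).mem_nhds h] with s hs
  rw [sMu, if_pos (le_of_lt hs)]

theorem tendsto_deriv_sMu_rpow {α : Type*} {l : Filter α} {μ t : α → ℝ} {a : ℝ} (ha : a ≠ 0)
    (hμ : Tendsto μ l (𝓝 0)) (ht : Tendsto t l (𝓝 a)) :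
    Tendsto (fun k => deriv (fun s => sMu (μ k) s ^ p) (t k)) l
      (𝓝 (deriv (fun s => |s| ^ p) a)) := by
  have hlt : ∀ᶠ k in l, μ k / 2 < |t k| :=
    (hμ.div_const 2).eventually_lt ht.abs (by simpa using abs_pos.mpr ha)
  refine ((continuousAt_deriv_abs_rpow ha).tendsto.comp ht).congr' ?_
  filter_upwards [hlt] with k hk
  exact (deriv_sMu_rpow_of_lt hk).symm

end Smoothing

theorem exists_sum_smul_eq_of_tendsto {ι E α : Type*} [Fintype ι] [NormedAddCommGroup E]
    [NormedSpace ℝ E] {l : Filter α} [l.NeBot] {b : ι → E} {d : α → ι → ℝ} {c₀ : ι → ℝ} {v : E}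
    (s : Finset ι) (hd : ∀ i ∉ s, Tendsto (fun k => d k i) l (𝓝 (c₀ i)))
    (h : Tendsto (fun k => ∑ i, d k i • b i) l (𝓝 v)) :
    ∃ c : ι → ℝ, (∀ i ∉ s, c i = c₀ i) ∧ ∑ i, c i • b i = v := by
  classical
  have hout : Tendsto (fun k => ∑ i ∈ sᶜ, d k i • b i) l (𝓝 (∑ i ∈ sᶜ, c₀ i • b i)) :=
    tendsto_finsetSum _ fun i hi => (hd i (Finset.mem_compl.mp hi)).smul_const _
  have hin : Tendsto (fun k => ∑ i ∈ s, d k i • b i) l (𝓝 (v - ∑ i ∈ sᶜ, c₀ i • b i)) :=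
    (h.sub hout).congr fun k => by rw [← Finset.sum_add_sum_compl s, add_sub_cancel_right]
  set V := Submodule.span ℝ (b '' s)
  have : FiniteDimensional ℝ V := FiniteDimensional.span_of_finite ℝ (s.finite_toSet.image b)
  have hmem : ∀ k, ∑ i ∈ s, d k i • b i ∈ V := fun k =>
    (Submodule.mem_span_image_finset_iff_exists_fun' ℝ).mpr ⟨d k, rfl⟩
  obtain ⟨c, hc⟩ := (Submodule.mem_span_image_finset_iff_exists_fun' ℝ).mp <|
    V.closed_of_finiteDimensional.mem_of_tendsto hin (Eventually.of_forall hmem)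
  refine ⟨s.piecewise c c₀, fun i hi => s.piecewise_eq_of_notMem _ _ hi, ?_⟩
  have hin_eq : ∑ i ∈ s, s.piecewise c c₀ i • b i = ∑ i ∈ s, c i • b i :=
    Finset.sum_congr rfl fun i hi => by rw [s.piecewise_eq_of_mem _ _ hi]
  have hout_eq : ∑ i ∈ sᶜ, s.piecewise c c₀ i • b i = ∑ i ∈ sᶜ, c₀ i • b i :=
    Finset.sum_congr rfl fun i hi => by rw [s.piecewise_eq_of_notMem _ _ (Finset.mem_compl.mp hi)]
  rw [← Finset.sum_add_sum_compl s, hin_eq, hout_eq, hc, sub_add_cancel]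

theorem Matrix.mulVec_ofLp_apply_eq_inner {m n : Type*} [Fintype n] (B : Matrix m n ℝ)
    (y : EuclideanSpace ℝ n) (i : m) : B.mulVec y.ofLp i = ⟪WithLp.toLp 2 (B i), y⟫ := by
  simp [Matrix.mulVec, dotProduct, PiLp.inner_apply, mul_comm]

theorem isRegularSubgradient_add_mul_sum_abs_inner_rpow {n : ℕ} {ι : Type*} [Fintype ι]
    {fhat : EuclideanSpace ℝ (Fin n) → ℝ} {x : EuclideanSpace ℝ (Fin n)}
    (hfhat : DifferentiableAt ℝ fhat x) {lam p : ℝ} (hlam : 0 < lam) (hp0 : 0 < p) (hp1 : p < 1)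
    (b : ι → EuclideanSpace ℝ (Fin n)) {c : ι → ℝ}
    (hc : ∀ i, ⟪b i, x⟫ ≠ 0 → c i = deriv (fun t => |t| ^ p) ⟪b i, x⟫) :
    IsRegularSubgradient (fun y => fhat y + lam * ∑ i, |⟪b i, y⟫| ^ p) x
      (gradient fhat x + lam • ∑ i, c i • b i) := by
  have hterm : ∀ i, IsRegularSubgradient (fun y => |⟪b i, y⟫| ^ p) x (c i • b i) := fun i =>
    isRegularSubgradient_abs_inner_rpow hp0 hp1 fun hi =>
      hc i hi ▸ ((contDiffAt_abs_rpow hi).differentiableAt one_ne_zero).hasDerivAt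
  exact hfhat.hasGradientAt.isRegularSubgradient.add <|
    (IsRegularSubgradient.sum _ fun i _ => hterm i).const_mul hlam

theorem gradient_subconsistency_lp_general (n m : ℕ)
    (fhat : EuclideanSpace ℝ (Fin n) → ℝ) (hfhat : ContDiff ℝ 1 fhat)
    (B : Matrix (Fin m) (Fin n) ℝ)
    (lam : ℝ) (hlam : 0 < lam) (p : ℝ) (hp0 : 0 < p) (hp1 : p < 1) :
    ∀ (x u : EuclideanSpace ℝ (Fin n)),
      (∃ (z : ℕ → EuclideanSpace ℝ (Fin n)) (μ : ℕ → ℝ),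
        Filter.Tendsto z Filter.atTop (nhds x) ∧ (∀ k, 0 < μ k) ∧
        Filter.Tendsto μ Filter.atTop (nhds 0) ∧
        Filter.Tendsto (fun k => gradient
            (fun y => fhat y + lam * ∑ i, sMu (μ k) (B.mulVec y i) ^ p) (z k))
          Filter.atTop (nhds u)) →
      IsLimitingSubgradient
        (fun y => fhat y + lam * ∑ i, |B.mulVec y i| ^ p) x u := by
  rintro x u ⟨z, μ, hz, hμ, hμ0, hgrad⟩
  set r : Fin m → EuclideanSpace ℝ (Fin n) := fun i => WithLp.toLp 2 (B i)
  simp only [B.mulVec_ofLp_apply_eq_inner] at hgrad ⊢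
  set d : ℕ → Fin m → ℝ := fun k i => deriv (fun t => sMu (μ k) t ^ p) ⟪r i, z k⟫
  have hgrad_eq : ∀ k, gradient (fun y => fhat y + lam * ∑ i, sMu (μ k) ⟪r i, y⟫ ^ p) (z k)
      = gradient fhat (z k) + lam • ∑ i, d k i • r i := fun k =>
    ((hfhat.differentiable one_ne_zero (z k)).hasGradientAt.add <| HasGradientAt.const_mul lam <|
      HasGradientAt.sum fun i _ =>
        (differentiable_sMu_rpow (hμ k) p _).hasDerivAt.hasGradientAt_comp_inner).gradient
  have hsum : Tendsto (fun k => ∑ i, d k i • r i) atTop (𝓝 (lam⁻¹ • (u - gradient fhat x))) := by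
    refine ((hgrad.sub ((hfhat.continuous_gradient.tendsto x).comp hz)).const_smul lam⁻¹).congr
      fun k => ?_
    rw [Function.comp_apply, hgrad_eq, add_sub_cancel_left, inv_smul_smul₀ hlam.ne']
  obtain ⟨c, hc, hcu⟩ := exists_sum_smul_eq_of_tendsto {i | ⟪r i, x⟫ = 0}
    (fun i hi => tendsto_deriv_sMu_rpow (by simpa using hi) hμ0
      (((continuous_const.inner continuous_id).tendsto x).comp hz)) hsum
  have hu : u = gradient fhat x + lam • ∑ i, c i • r i := by
    rw [hcu, smul_inv_smul₀ hlam.ne', add_sub_cancel]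
  rw [hu]
  exact (isRegularSubgradient_add_mul_sum_abs_inner_rpow (hfhat.differentiable one_ne_zero x)
    hlam hp0 hp1 r fun i hi => hc i (by simpa using hi)).isLimitingSubgradient

/-- Gradient sub-consistency on `ℝⁿ` of the smoothing
`f̃(x,μ) = f̂(x) + λ Σᵢ s_μ((Bx)ᵢ)ᵖ` of `f(x) = f̂(x) + λ Σᵢ |(Bx)ᵢ|ᵖ`, where `f̂` is
continuously differentiable, `B` has full column rank, `λ > 0`, and `0 < p < 1`:
every limit `u` of `∇ₓ f̃(z_k, μ_k)` along sequences `z_k → x`, `μ_k → 0⁺` belongs to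
the limiting subdifferential `∂f(x)`. -/
theorem gradient_subconsistency_lp (n m : ℕ) (hn : 1 ≤ n) (hm : 1 ≤ m)
    (fhat : EuclideanSpace ℝ (Fin n) → ℝ) (hfhat : ContDiff ℝ 1 fhat)
    (B : Matrix (Fin m) (Fin n) ℝ) (hB : Function.Injective B.mulVec)
    (lam : ℝ) (hlam : 0 < lam) (p : ℝ) (hp0 : 0 < p) (hp1 : p < 1) :
    ∀ (x u : EuclideanSpace ℝ (Fin n)),
      (∃ (z : ℕ → EuclideanSpace ℝ (Fin n)) (μ : ℕ → ℝ),
        Filter.Tendsto z Filter.atTop (nhds x) ∧ (∀ k, 0 < μ k) ∧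
        Filter.Tendsto μ Filter.atTop (nhds 0) ∧
        Filter.Tendsto (fun k => gradient
            (fun y => fhat y + lam * ∑ i, sMu (μ k) (B.mulVec y i) ^ p) (z k))
          Filter.atTop (nhds u)) →
      IsLimitingSubgradient
        (fun y => fhat y + lam * ∑ i, |B.mulVec y i| ^ p) x u :=
  gradient_subconsistency_lp_general n m fhat hfhat B lam hlam p hp0 hp1
end
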